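/- For every integer D ≥ 5 there exists a constant k(D) > 0 such that for all a₀ > 0 the Lebesgue measure of the truncated valley satisfies μ(Ω_{a₀}) ≤ k(D) · a₀^{4−D}. -/

import Mathlib

/-!
Let `X` lie in the valley with `|X| ≥ a₀`, and let `Xᵢ` be its longest component, so that
`‖Xᵢ‖ ≥ L := a₀ / √D`. Since `V_B(X) ≥ ‖Xⱼ × Xᵢ‖²`, every other `Xⱼ` lies in the tube
`{y : ‖y‖ ≤ ‖Xᵢ‖, ‖y × Xᵢ‖ ≤ 1}`, a piece of the cylinder of radius `1 / ‖Xᵢ‖` around `ℝ Xᵢ`,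
of volume `O(1 / ‖Xᵢ‖)`. By Fubini the part of the valley where `‖Xᵢ‖ ∈ [s, 2s]` has volume
`O(s³ · s^(1-D)) = O(s^(4-D))`; for `D ≥ 5` the sum over the dyadic scales `s = 2ᵐ L` is
geometric and gives `O(L^(4-D))`.
-/

open MeasureTheory

/-- The cross product on `ℝ³` viewed as `EuclideanSpace ℝ (Fin 3)`. -/
noncomputable def cross3 (u v : EuclideanSpace ℝ (Fin 3)) : EuclideanSpace ℝ (Fin 3) :=
  (WithLp.equiv 2 (Fin 3 → ℝ)).symm
    (crossProduct ((WithLp.equiv 2 (Fin 3 → ℝ)) u) ((WithLp.equiv 2 (Fin 3 → ℝ)) v))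

/-- The SU(2) bosonic membrane potential
`V_B(X) = (1/2) ∑_{i,j} |X_i × X_j|²`. -/
noncomputable def VB (D : ℕ) (X : Fin D → EuclideanSpace ℝ (Fin 3)) : ℝ :=
  (1 / 2) * ∑ i, ∑ j, ‖cross3 (X i) (X j)‖ ^ 2

/-- The Euclidean norm of a configuration `X = (X₁, …, X_D)` viewed as a point
of `ℝ^{3D}`. -/
noncomputable def confNorm (D : ℕ) (X : Fin D → EuclideanSpace ℝ (Fin 3)) : ℝ :=
  Real.sqrt (∑ i, ‖X i‖ ^ 2)

open Real
open scoped ENNReal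

theorem OrthonormalBasis.volume_setOf_abs_repr_le {ι F : Type*} [Fintype ι] [NormedAddCommGroup F]
    [InnerProductSpace ℝ F] [FiniteDimensional ℝ F] [MeasurableSpace F] [BorelSpace F]
    (b : OrthonormalBasis ι ℝ F) (r : ι → ℝ) :
    volume {y : F | ∀ i, |b.repr y i| ≤ r i} = ∏ i, ENNReal.ofReal (2 * r i) := by
  have hpres := (PiLp.volume_preserving_ofLp ι).comp b.measurePreserving_repr
  have hset : {y : F | ∀ i, |b.repr y i| ≤ r i} =
      (WithLp.ofLp ∘ b.repr) ⁻¹' Set.univ.pi fun i => Set.Icc (-r i) (r i) := by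
    ext y; simp only [Set.mem_ofPred_eq, abs_le, Set.mem_preimage, Set.mem_univ_pi,
      Function.comp_apply, Set.mem_Icc]
  rw [hset, hpres.measure_preimage
    (MeasurableSet.univ_pi fun _ => measurableSet_Icc).nullMeasurableSet, volume_pi_pi]
  simp only [Real.volume_Icc]
  ring_nf

theorem exists_orthonormalBasis_apply_eq {ι E : Type*} [Fintype ι] [NormedAddCommGroup E]
    [InnerProductSpace ℝ E] [FiniteDimensional ℝ E] (hcard : Module.finrank ℝ E = Fintype.card ι)
    {u : E} (hu : ‖u‖ = 1) (i : ι) : ∃ b : OrthonormalBasis ι ℝ E, b i = u := by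
  have hv : Orthonormal ℝ (({i} : Set ι).domRestrict fun _ => u) :=
    ⟨fun _ => hu, fun j k hjk => absurd (Subsingleton.elim j k) hjk⟩
  obtain ⟨b, hb⟩ := hv.exists_orthonormalBasis_extension_of_card_eq hcard
  exact ⟨b, hb i rfl⟩

theorem volume_setOf_forall_ne_mem_le {E : Type*} [MeasureSpace E]
    [SigmaFinite (volume : Measure E)] {n : ℕ} (i : Fin (n + 1)) {A : Set E}
    (hA : MeasurableSet A) {B : E → Set E} (hB : MeasurableSet {p : E × E | p.2 ∈ B p.1})
    {c : ℝ≥0∞} (hc : ∀ x ∈ A, volume (B x) ≤ c) :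
    volume {X : Fin (n + 1) → E | X i ∈ A ∧ ∀ j, j ≠ i → X j ∈ B (X i)} ≤ volume A * c ^ n := by
  set S := {q : E × (Fin n → E) | q.1 ∈ A ∧ ∀ j, q.2 j ∈ B q.1}
  have hS : MeasurableSet S := by
    simp only [S, Set.ofPred_and, Set.ofPred_forall]
    exact (hA.preimage measurable_fst).inter <| .iInter fun j =>
      hB.preimage (f := fun q : E × (Fin n → E) => (q.1, q.2 j)) (by fun_prop)
  have hpre : {X : Fin (n + 1) → E | X i ∈ A ∧ ∀ j, j ≠ i → X j ∈ B (X i)} =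
      MeasurableEquiv.piFinSuccAbove (fun _ => E) i ⁻¹' S := by
    ext X
    simp [S, Fin.forall_iff_succAbove i, Fin.succAbove_ne, Fin.removeNth]
  have hslice : ∀ x, volume (Prod.mk x ⁻¹' S) ≤ A.indicator (fun _ => c ^ n) x := by
    intro x
    by_cases hx : x ∈ A
    · have : Prod.mk x ⁻¹' S = Set.univ.pi fun _ => B x := by ext Y; simp [S, hx]
      rw [this, volume_pi_pi, Finset.prod_const, Finset.card_univ, Fintype.card_fin,
        Set.indicator_of_mem hx]
      exact pow_le_pow_left' (hc x hx) n
    · have : Prod.mk x ⁻¹' S = ∅ := by ext Y; simp [S, hx]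
      simp [this]
  rw [hpre, (volume_preserving_piFinSuccAbove (fun _ => E) i).measure_preimage
    hS.nullMeasurableSet, Measure.volume_eq_prod, Measure.prod_apply hS, mul_comm]
  exact (lintegral_mono hslice).trans_eq (lintegral_indicator_const hA _)

theorem two_pow_mul_zpow_le {L : ℝ} (hL : 0 < L) {k : ℤ} (hk : k ≤ -1) (m : ℕ) :
    (2 ^ m * L) ^ k ≤ L ^ k * (1 / 2) ^ m := by
  rw [mul_zpow, mul_comm]
  gcongr
  calc ((2 : ℝ) ^ m) ^ k ≤ ((2 : ℝ) ^ m) ^ (-1 : ℤ) :=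
        zpow_le_zpow_right₀ (one_le_pow₀ one_le_two) hk
    _ = (1 / 2) ^ m := by rw [zpow_neg_one, one_div, inv_pow]

theorem tsum_ofReal_mul_half_pow {c : ℝ} (hc : 0 ≤ c) :
    ∑' m : ℕ, ENNReal.ofReal (c * (1 / 2) ^ m) = ENNReal.ofReal (2 * c) := by
  rw [← ENNReal.ofReal_tsum_of_nonneg (fun m => by positivity)
    (summable_geometric_two.mul_left c), tsum_mul_left, tsum_geometric_two, mul_comm]

theorem exists_two_pow_mul_le_le {L t : ℝ} (hL : 0 < L) (hLt : L ≤ t) :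
    ∃ m : ℕ, 2 ^ m * L ≤ t ∧ t ≤ 2 * (2 ^ m * L) := by
  obtain ⟨m, hm, hm'⟩ := exists_nat_pow_near ((one_le_div hL).2 hLt) one_lt_two
  refine ⟨m, (le_div_iff₀ hL).1 hm, ?_⟩
  rw [← mul_assoc, ← pow_succ']
  exact ((div_lt_iff₀ hL).1 hm').le

local notation "E3" => EuclideanSpace ℝ (Fin 3)

theorem norm_cross3_sq (u v : E3) : ‖cross3 u v‖ ^ 2 = ‖u‖ ^ 2 * ‖v‖ ^ 2 - inner ℝ u v ^ 2 := by
  have h := cross_dot_cross u.ofLp v.ofLp u.ofLp v.ofLp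
  simp only [← real_inner_self_eq_norm_sq, cross3, PiLp.inner_apply, RCLike.inner_apply,
    conj_trivial, dotProduct, WithLp.equiv_symm_apply, WithLp.equiv_apply] at *
  simp only [mul_comm (v.ofLp _) (u.ofLp _), ← pow_two] at h ⊢
  exact h

theorem norm_cross3_comm (u v : E3) : ‖cross3 u v‖ = ‖cross3 v u‖ := by
  rw [cross3, cross3, WithLp.equiv_apply, WithLp.equiv_apply, ← cross_anticomm,
    WithLp.equiv_symm_apply, WithLp.toLp_neg, norm_neg]

theorem cross3_self (u : E3) : cross3 u u = 0 := by
  rw [cross3, WithLp.equiv_apply, cross_self, WithLp.equiv_symm_apply, WithLp.toLp_zero]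

theorem continuous_cross3 : Continuous fun p : E3 × E3 => cross3 p.1 p.2 := by
  refine (PiLp.continuous_toLp 2 _).comp (continuous_pi fun i => ?_)
  simp only [WithLp.equiv_apply, cross_apply]
  fin_cases i <;>
    simp only [Fin.isValue, Fin.zero_eta, Fin.mk_one, Fin.reduceFinMk, Matrix.cons_val_zero,
      Matrix.cons_val_one, Matrix.cons_val] <;>
    fun_prop

/-- `‖y‖ ^ 2 - ⟪u, y⟫ ^ 2` is the squared distance from `y` to the line `ℝ u`, so in an
orthonormal basis starting with `u` this set lies in a box of sides `2R × 2ε × 2ε`. -/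
theorem volume_truncated_cylinder_le {u : E3} (hu : ‖u‖ = 1) {R ε : ℝ} (hR : 0 ≤ R) (hε : 0 ≤ ε) :
    volume {y : E3 | ‖y‖ ≤ R ∧ ‖y‖ ^ 2 - inner ℝ u y ^ 2 ≤ ε ^ 2} ≤
      ENNReal.ofReal (8 * R * ε ^ 2) := by
  obtain ⟨b, rfl⟩ := exists_orthonormalBasis_apply_eq (by simp) hu (0 : Fin 3)
  have hsub : {y : E3 | ‖y‖ ≤ R ∧ ‖y‖ ^ 2 - inner ℝ (b 0) y ^ 2 ≤ ε ^ 2} ⊆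
      {y | ∀ i, |b.repr y i| ≤ ![R, ε, ε] i} := by
    rintro y ⟨hyR, hyε⟩ i
    have hsum := b.sum_sq_inner_right y
    rw [Fin.sum_univ_three] at hsum
    simp only [b.repr_apply_apply]
    refine abs_le_of_sq_le_sq ?_ (by fin_cases i <;> simpa)
    fin_cases i <;>
      simp only [Fin.isValue, Fin.zero_eta, Fin.mk_one, Fin.reduceFinMk, Matrix.cons_val_zero,
        Matrix.cons_val_one, Matrix.cons_val] <;>
      nlinarith [sq_nonneg (inner ℝ (b 1) y), sq_nonneg (inner ℝ (b 2) y),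
      norm_nonneg y]
  calc _ ≤ _ := measure_mono hsub
    _ = _ := b.volume_setOf_abs_repr_le _
    _ = ENNReal.ofReal (8 * R * ε ^ 2) := by
      simp only [Fin.prod_univ_three, Matrix.cons_val_zero, Matrix.cons_val_one,
        Matrix.cons_val_two, Matrix.tail_cons, Matrix.head_cons]
      rw [← ENNReal.ofReal_mul (by positivity), ← ENNReal.ofReal_mul (by positivity)]
      ring_nf

def tube (x : E3) : Set E3 := {y | ‖y‖ ≤ ‖x‖ ∧ ‖cross3 y x‖ ≤ 1}

theorem volume_tube_le {x : E3} (hx : x ≠ 0) :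
    volume (tube x) ≤ ENNReal.ofReal (8 / ‖x‖) := by
  have hx' : 0 < ‖x‖ := norm_pos_iff.2 hx
  -- `‖y × x‖ = ‖x‖ · dist(y, ℝ x)`
  have hsub : tube x ⊆
      {y | ‖y‖ ≤ ‖x‖ ∧ ‖y‖ ^ 2 - inner ℝ (‖x‖⁻¹ • x) y ^ 2 ≤ (1 / ‖x‖) ^ 2} := by
    rintro y ⟨hyx, hcross⟩
    refine ⟨hyx, ?_⟩
    have h := pow_le_one₀ (norm_nonneg _) hcross (n := 2)
    rw [norm_cross3_sq, real_inner_comm] at h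
    rw [real_inner_smul_left, div_pow, le_div_iff₀ (by positivity)]
    field_simp
    linarith
  calc volume (tube x) ≤ _ := measure_mono hsub
    _ ≤ ENNReal.ofReal (8 * ‖x‖ * (1 / ‖x‖) ^ 2) :=
      volume_truncated_cylinder_le (norm_smul_inv_norm hx) hx'.le (by positivity)
    _ = ENNReal.ofReal (8 / ‖x‖) := by
      congr 1
      field_simp

theorem isClosed_setOf_mem_tube : IsClosed {p : E3 × E3 | p.2 ∈ tube p.1} := by
  have hcross : Continuous fun p : E3 × E3 => ‖cross3 p.2 p.1‖ :=
    (continuous_cross3.comp continuous_swap).norm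
  exact (isClosed_le continuous_snd.norm continuous_fst.norm).inter
    (isClosed_le hcross continuous_const)

def shell (n : ℕ) (i : Fin (n + 1)) (s : ℝ) : Set (Fin (n + 1) → E3) :=
  {X | X i ∈ Metric.closedBall 0 (2 * s) \ Metric.ball 0 s ∧ ∀ j, j ≠ i → X j ∈ tube (X i)}

theorem volume_shell_le (n : ℕ) (i : Fin (n + 1)) {s : ℝ} (hs : 0 < s) :
    volume (shell n i s) ≤ ENNReal.ofReal (π * 4 / 3 * 8 ^ (n + 1) * s ^ ((3 : ℤ) - n)) := by
  have htube : ∀ x ∈ Metric.closedBall (0 : E3) (2 * s) \ Metric.ball 0 s,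
      volume (tube x) ≤ ENNReal.ofReal (8 / s) := by
    rintro x ⟨-, hx⟩
    have hsx : s ≤ ‖x‖ := by simpa using hx
    exact (volume_tube_le (norm_pos_iff.1 (hs.trans_le hsx))).trans
      (ENNReal.ofReal_le_ofReal (div_le_div_of_nonneg_left (by norm_num) hs hsx))
  refine (volume_setOf_forall_ne_mem_le i (measurableSet_closedBall.diff measurableSet_ball)
    isClosed_setOf_mem_tube.measurableSet htube).trans ?_
  calc volume (Metric.closedBall (0 : E3) (2 * s) \ Metric.ball 0 s) * ENNReal.ofReal (8 / s) ^ n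
      ≤ volume (Metric.closedBall (0 : E3) (2 * s)) * ENNReal.ofReal (8 / s) ^ n := by
        gcongr; exact Set.sdiff_subset
    _ = ENNReal.ofReal ((2 * s) ^ 3 * (π * 4 / 3) * (8 / s) ^ n) := by
        rw [EuclideanSpace.volume_closedBall_fin_three, ← ENNReal.ofReal_pow (by positivity),
          ← ENNReal.ofReal_pow (by positivity), ← ENNReal.ofReal_mul (by positivity),
          ← ENNReal.ofReal_mul (by positivity)]
    _ = ENNReal.ofReal (π * 4 / 3 * 8 ^ (n + 1) * s ^ ((3 : ℤ) - n)) := by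
        rw [zpow_sub₀ hs.ne', zpow_natCast, zpow_ofNat]
        congr 1
        rw [div_pow]
        field_simp
        ring

theorem sq_norm_cross3_le_VB {D : ℕ} (X : Fin D → E3) (i j : Fin D) :
    ‖cross3 (X i) (X j)‖ ^ 2 ≤ VB D X := by
  rcases eq_or_ne i j with rfl | hij
  · rw [cross3_self, norm_zero, zero_pow two_ne_zero, VB]
    positivity
  · have hpair := Finset.sum_le_sum_of_subset_of_nonneg (Finset.subset_univ {(i, j), (j, i)})
      fun (p : Fin D × Fin D) _ _ => sq_nonneg ‖cross3 (X p.1) (X p.2)‖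
    rw [Finset.sum_pair (by simp [hij]), Fintype.sum_prod_type] at hpair
    rw [VB, norm_cross3_comm (X j)] at *
    linarith

theorem confNorm_le_of_forall_norm_le {D : ℕ} {X : Fin D → E3} {i : Fin D}
    (h : ∀ j, ‖X j‖ ≤ ‖X i‖) : confNorm D X ≤ √D * ‖X i‖ := by
  rw [confNorm, ← Real.sqrt_sq (norm_nonneg (X i)), ← Real.sqrt_mul (Nat.cast_nonneg D)]
  gcongr
  calc ∑ j, ‖X j‖ ^ 2 ≤ ∑ _j : Fin D, ‖X i‖ ^ 2 := by gcongr with j; exact h j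
    _ = D * ‖X i‖ ^ 2 := by simp

theorem valley_subset_iUnion_shell (n : ℕ) {a₀ : ℝ} (ha₀ : 0 < a₀) :
    {X : Fin (n + 1) → E3 | VB (n + 1) X < 1 ∧ a₀ ≤ confNorm (n + 1) X} ⊆
      ⋃ i, ⋃ m : ℕ, shell n i (2 ^ m * (a₀ / √(n + 1))) := by
  rintro X ⟨hV, ha₀X⟩
  obtain ⟨i, -, hmax⟩ := Finset.exists_max_image Finset.univ (fun j => ‖X j‖) Finset.univ_nonempty
  have hmax : ∀ j, ‖X j‖ ≤ ‖X i‖ := fun j => hmax j (Finset.mem_univ j)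
  have hL : 0 < a₀ / √(n + 1) := by positivity
  have hLX : a₀ / √(n + 1) ≤ ‖X i‖ := by
    rw [div_le_iff₀' (by positivity)]
    exact_mod_cast ha₀X.trans (confNorm_le_of_forall_norm_le hmax)
  obtain ⟨m, hm, hm'⟩ := exists_two_pow_mul_le_le hL hLX
  refine Set.mem_iUnion₂.2 ⟨i, m, ⟨by simp [hm, hm'], fun j _ => ⟨hmax j, ?_⟩⟩⟩
  exact (sq_le_one_iff₀ (norm_nonneg _)).1 ((sq_norm_cross3_le_VB X j i).trans hV.le)

/-- For every integer `D ≥ 5` there is a constant `k(D) > 0` such that for every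
`a₀ > 0` the Lebesgue measure of the truncated valley
`Ω_{a₀} = {X ∈ (ℝ³)^D : V_B(X) < 1, |X| ≥ a₀}` satisfies
`μ(Ω_{a₀}) ≤ k(D) · a₀^{4 − D}`. -/
theorem measure_truncated_valley_le (D : ℕ) (hD : 5 ≤ D) :
    ∃ k : ℝ, 0 < k ∧ ∀ a₀ : ℝ, 0 < a₀ →
      volume {X : Fin D → EuclideanSpace ℝ (Fin 3) | VB D X < 1 ∧ a₀ ≤ confNorm D X} ≤
        ENNReal.ofReal (k * a₀ ^ ((4 : ℤ) - (D : ℤ))) := by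
  obtain ⟨n, rfl⟩ : ∃ n, D = n + 1 := ⟨D - 1, by omega⟩
  have hk : (3 : ℤ) - n ≤ -1 := by omega
  set K : ℝ := π * 4 / 3 * 8 ^ (n + 1)
  refine ⟨2 * (n + 1) * K / √(n + 1) ^ ((3 : ℤ) - n), by positivity, fun a₀ ha₀ => ?_⟩
  set L := a₀ / √(n + 1)
  have hL : 0 < L := by positivity
  calc _ ≤ volume (⋃ i, ⋃ m : ℕ, shell n i (2 ^ m * L)) :=
        measure_mono (valley_subset_iUnion_shell n ha₀)
    _ ≤ ∑' i, ∑' m : ℕ, volume (shell n i (2 ^ m * L)) :=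
        (measure_iUnion_le _).trans (ENNReal.tsum_le_tsum fun i => measure_iUnion_le _)
    _ ≤ ∑' i : Fin (n + 1), ∑' m : ℕ, ENNReal.ofReal (K * L ^ ((3 : ℤ) - n) * (1 / 2) ^ m) := by
        gcongr with i m
        refine (volume_shell_le n i (by positivity)).trans (ENNReal.ofReal_le_ofReal ?_)
        rw [mul_assoc K]
        exact mul_le_mul_of_nonneg_left (two_pow_mul_zpow_le hL hk m) (by positivity : 0 ≤ K)
    _ = ENNReal.ofReal (2 * (n + 1) * K / √(n + 1) ^ ((3 : ℤ) - n) *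
          a₀ ^ ((4 : ℤ) - ((n + 1 : ℕ) : ℤ))) := by
        rw [tsum_fintype]
        simp only [tsum_ofReal_mul_half_pow (by positivity : 0 ≤ K * L ^ ((3 : ℤ) - n)),
          Finset.sum_const, Finset.card_univ, Fintype.card_fin, nsmul_eq_mul]
        rw [← ENNReal.ofReal_natCast, ← ENNReal.ofReal_mul (by positivity), div_zpow]
        congr 1
        push_cast
        ring_nf
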